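/- Let γ: [0, L] → ℝ³ be a unit-speed C¹ curve with γ(0) ∈ ball(0, δ) ∩ {x₃ > 0} and |⟨γ'(t), (0,0,−1)⟩| > 1 − ρ for all t, where ⟨γ'(0), (0,0,−1)⟩ > 0, ρ ∈ (0, 1/2), δ > 0, and L ≥ 2δ. If x₃(γ(0)) < δ, L(1−ρ) > δ and δ + L·√(ρ(2−ρ)) < 1, then γ crosses the plane {x₃ = 0} at a point inside ball(0,1): there exists t₀ ∈ (0, L] with x₃(γ(t₀)) = 0 and |γ(t₀)| < 1. -/

import Mathlib

open Metric Filter Set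
open scoped RealInnerProductSpace

/-- Euclidean 3-space. -/
local notation "E3" => EuclideanSpace ℝ (Fin 3)

/-- The downward vertical unit vector `(0,0,-1)`. -/
noncomputable def downVec : EuclideanSpace ℝ (Fin 3) :=
  EuclideanSpace.single 2 (-1 : ℝ)

noncomputable def horizProj : E3 →L[ℝ] EuclideanSpace ℝ (Fin 3) :=
  ContinuousLinearMap.id ℝ _ - (EuclideanSpace.proj (2 : Fin 3)).smulRight (EuclideanSpace.single 2 (1:ℝ))

lemma horizProj_apply (x : E3) (i : Fin 3) :
    horizProj x i = x i - x 2 * (EuclideanSpace.single (2 : Fin 3) (1:ℝ) i) := by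
  simp [horizProj]

lemma horizProj_coord0 (x : E3) : horizProj x 0 = x 0 := by
  rw [horizProj_apply]; simp [EuclideanSpace.single_apply]

lemma horizProj_coord1 (x : E3) : horizProj x 1 = x 1 := by
  rw [horizProj_apply]; simp [EuclideanSpace.single_apply]

lemma horizProj_coord2 (x : E3) : horizProj x 2 = 0 := by
  rw [horizProj_apply]; simp [EuclideanSpace.single_apply]

lemma norm_horizProj_sq (x : E3) : ‖horizProj x‖ ^ 2 = ‖x‖ ^ 2 - (x 2) ^ 2 := by
  rw [EuclideanSpace.norm_eq, EuclideanSpace.norm_eq, Real.sq_sqrt (by positivity),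
    Real.sq_sqrt (by positivity)]
  rw [Fin.sum_univ_three, Fin.sum_univ_three, horizProj_coord0, horizProj_coord1,
    horizProj_coord2]
  simp [Real.norm_eq_abs, sq_abs]

example (v : E3) : ⟪v, downVec⟫ = -(v 2) := by
  rw [downVec, EuclideanSpace.inner_single_right]; simp

/-- A unit-speed C¹ curve starting in `ball(0,δ) ∩ {x₃ > 0}`, whose derivative
makes a definite angle with the vertical (`|⟨γ', (0,0,-1)⟩| > 1 - ρ`) and points
downward at time `0`, must cross the plane `{x₃ = 0}` at a point inside the unit
ball, provided `x₃(γ(0)) < δ`, `L(1-ρ) > δ` and `δ + L√(ρ(2-ρ)) < 1`. -/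
theorem stmt_13 (L δ ρ : ℝ) (γ γ' : ℝ → E3)
    (hρ : ρ ∈ Set.Ioo (0 : ℝ) (1/2)) (hδ : 0 < δ) (hL : 2 * δ ≤ L)
    (hderiv : ∀ t ∈ Set.Icc (0 : ℝ) L, HasDerivAt γ (γ' t) t)
    (hderivcont : ContinuousOn γ' (Set.Icc 0 L))
    (hunit : ∀ t ∈ Set.Icc (0 : ℝ) L, ‖γ' t‖ = 1)
    (hsteep : ∀ t ∈ Set.Icc (0 : ℝ) L, 1 - ρ < |⟪γ' t, downVec⟫|)
    (hsign : 0 < ⟪γ' 0, downVec⟫)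
    (hstart : γ 0 ∈ Metric.ball (0 : E3) δ ∩ {x : E3 | 0 < x 2})
    (hheight : γ 0 2 < δ)
    (hlen : δ < L * (1 - ρ))
    (hhoriz : δ + L * Real.sqrt (ρ * (2 - ρ)) < 1) :
    ∃ t₀ ∈ Set.Ioc (0 : ℝ) L, γ t₀ 2 = 0 ∧ ‖γ t₀‖ < 1 := by
  obtain ⟨hρ0, hρ2⟩ := hρ
  obtain ⟨hball, hpos⟩ := hstart
  have h1ρ : (0:ℝ) < 1 - ρ := by linarith
  have hLpos : 0 < L := by linarith
  set φ : ℝ → ℝ := fun t => ⟪γ' t, downVec⟫ with hφdef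
  have hφcont : ContinuousOn φ (Icc 0 L) := hderivcont.inner continuousOn_const
  -- φ stays above 1 - ρ
  have hφpos : ∀ t ∈ Icc (0:ℝ) L, 1 - ρ < φ t := by
    intro t ht
    by_contra h
    push_neg at h
    have hneg : φ t < 0 := by
      have := hsteep t ht
      rcases abs_cases (φ t) with ⟨he, _⟩ | ⟨he, h2⟩
      · simp only [hφdef] at h; linarith
      · linarith
    have hsub : Icc (0:ℝ) t ⊆ Icc 0 L := Icc_subset_Icc le_rfl ht.2
    obtain ⟨s, hs, hφs⟩ := intermediate_value_Icc' ht.1 (hφcont.mono hsub)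
      (⟨hneg.le, hsign.le⟩ : (0:ℝ) ∈ Icc (φ t) (φ 0))
    have := hsteep s (hsub hs)
    rw [show ⟪γ' s, downVec⟫ = φ s from rfl, hφs] at this
    simp at this; linarith
  -- third coordinate and its derivative
  have hcoord : ∀ v : E3, ⟪v, downVec⟫ = -(v 2) := by
    intro v; rw [downVec, EuclideanSpace.inner_single_right]; simp
  have hf' : ∀ t ∈ Icc (0:ℝ) L, HasDerivAt (fun s => γ s 2) (γ' t 2) t := by
    intro t ht
    exact (EuclideanSpace.proj (2 : Fin 3)).hasFDerivAt.comp_hasDerivAt t (hderiv t ht)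
  have hder_neg : ∀ t ∈ Icc (0:ℝ) L, γ' t 2 < -(1 - ρ) := by
    intro t ht
    have := hφpos t ht
    rw [hφdef] at this
    simp only at this
    rw [hcoord (γ' t)] at this
    linarith
  have hγcont : ContinuousOn γ (Icc 0 L) :=
    fun t ht => (hderiv t ht).continuousAt.continuousWithinAt
  have hfcont : ContinuousOn (fun s => γ s 2) (Icc 0 L) :=
    ((EuclideanSpace.proj (2 : Fin 3)).continuous.comp_continuousOn hγcont)
  -- f L < 0 via strict antitonicity of g = f + (1-ρ) t
  have hganti : StrictAntiOn (fun s => γ s 2 + (1 - ρ) * s) (Icc 0 L) := by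
    apply strictAntiOn_of_hasDerivWithinAt_neg (convex_Icc 0 L)
      (hfcont.add (continuousOn_const.mul continuousOn_id))
      (f' := fun t => γ' t 2 + (1 - ρ))
    · intro x hx
      rw [interior_Icc] at hx
      have := ((hf' x (Ioo_subset_Icc_self hx)).add
        ((hasDerivAt_id x).const_mul (1 - ρ))).hasDerivWithinAt
        (s := interior (Icc (0:ℝ) L))
      rw [mul_one] at this; exact this
    · intro x hx
      rw [interior_Icc] at hx
      have := hder_neg x (Ioo_subset_Icc_self hx)
      linarith
  have hfL : γ L 2 < 0 := by
    have h0m : (0:ℝ) ∈ Icc (0:ℝ) L := ⟨le_refl _, hLpos.le⟩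
    have hLm : L ∈ Icc (0:ℝ) L := ⟨hLpos.le, le_refl _⟩
    have := hganti h0m hLm hLpos
    simp only at this
    linarith
  -- IVT : crossing time t₀
  obtain ⟨t₀, ht₀mem, ht₀⟩ := intermediate_value_Icc' hLpos.le hfcont
    (⟨hfL.le, (hpos : 0 < γ 0 2).le⟩ : (0:ℝ) ∈ Icc (γ L 2) (γ 0 2))
  have ht₀pos : 0 < t₀ := by
    rcases eq_or_lt_of_le ht₀mem.1 with h | h
    · exfalso; rw [← h] at ht₀; exact absurd ht₀ (ne_of_gt hpos)
    · exact h
  refine ⟨t₀, ⟨ht₀pos, ht₀mem.2⟩, ht₀, ?_⟩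
  -- horizontal estimate
  have hsqrt_nonneg : 0 ≤ Real.sqrt (ρ * (2 - ρ)) := Real.sqrt_nonneg _
  have hC : ∀ t ∈ Icc (0:ℝ) L, ‖horizProj (γ' t)‖ ≤ Real.sqrt (ρ * (2 - ρ)) := by
    intro t ht
    have h2 := hder_neg t ht
    have hsq : ‖horizProj (γ' t)‖ ^ 2 ≤ ρ * (2 - ρ) := by
      rw [norm_horizProj_sq, hunit t ht]; nlinarith
    calc ‖horizProj (γ' t)‖ = Real.sqrt (‖horizProj (γ' t)‖ ^ 2) :=
          (Real.sqrt_sq (norm_nonneg _)).symm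
      _ ≤ Real.sqrt (ρ * (2 - ρ)) := Real.sqrt_le_sqrt hsq
  have hmv : ‖horizProj (γ t₀) - horizProj (γ 0)‖ ≤ Real.sqrt (ρ * (2 - ρ)) * ‖t₀ - 0‖ := by
    apply Convex.norm_image_sub_le_of_norm_hasDerivWithin_le (s := Icc (0:ℝ) L)
      (f' := fun t => horizProj (γ' t)) ?_ ?_ (convex_Icc 0 L)
      ⟨le_refl _, hLpos.le⟩ ht₀mem
    · intro x hx
      exact (horizProj.hasFDerivAt.comp_hasDerivAt x (hderiv x hx)).hasDerivWithinAt
    · exact hC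
  -- γ t₀ lies in the horizontal plane
  have hfix : horizProj (γ t₀) = γ t₀ := by
    apply PiLp.ext
    intro i
    fin_cases i
    · exact horizProj_coord0 _
    · exact horizProj_coord1 _
    · show horizProj (γ t₀) 2 = γ t₀ 2
      rw [horizProj_coord2]; exact ht₀.symm
  have hπ0 : ‖horizProj (γ 0)‖ ≤ ‖γ 0‖ := by
    rw [← Real.sqrt_sq (norm_nonneg _), ← Real.sqrt_sq (norm_nonneg (γ 0))]
    apply Real.sqrt_le_sqrt
    rw [norm_horizProj_sq]
    nlinarith [sq_nonneg (γ 0 2)]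
  have hball' : ‖γ 0‖ < δ := by rwa [mem_ball_zero_iff] at hball
  calc ‖γ t₀‖ = ‖horizProj (γ 0) + (horizProj (γ t₀) - horizProj (γ 0))‖ := by
        rw [add_sub_cancel, hfix]
    _ ≤ ‖horizProj (γ 0)‖ + ‖horizProj (γ t₀) - horizProj (γ 0)‖ := norm_add_le _ _
    _ ≤ ‖γ 0‖ + Real.sqrt (ρ * (2 - ρ)) * ‖t₀ - 0‖ := add_le_add hπ0 hmv
    _ < δ + L * Real.sqrt (ρ * (2 - ρ)) := by
        rw [sub_zero, Real.norm_eq_abs, abs_of_pos ht₀pos]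
        have h1 : Real.sqrt (ρ * (2 - ρ)) * t₀ ≤ Real.sqrt (ρ * (2 - ρ)) * L :=
          mul_le_mul_of_nonneg_left ht₀mem.2 hsqrt_nonneg
        nlinarith
    _ < 1 := hhoriz
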